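/- If a deleted vertex x of a graph has degree 1 (a pendant vertex), then removing x does not decrease the edge expansion restricted to sets avoiding the structure: h(G − x) ≥ h(G), provided G has at least 3 vertices. -/

import Mathlib

/-!
Put the pendant vertex `x` on the side of its unique neighbour: a cut `S` of `G − x` becomes a cut
of `G` with exactly the same crossing edges and at most one more vertex. If `S ∪ {x}` is then too
large to be admissible, `|V| = 2|S| + 1` and its complement has `|S|` vertices and the same cut.
-/

open Finset

/-- Number of edges of `G` crossing the cut `(S, Sᶜ)`. -/
def cutEdges {V : Type*} [Fintype V] [DecidableEq V] (G : SimpleGraph V)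
    [DecidableRel G.Adj] (S : Finset V) : ℕ :=
  ((S ×ˢ Sᶜ).filter (fun p => G.Adj p.1 p.2)).card

/-- Volume of a vertex set: sum of degrees. -/
def vol {V : Type*} [Fintype V] (G : SimpleGraph V) [DecidableRel G.Adj]
    (S : Finset V) : ℕ :=
  ∑ x ∈ S, G.degree x

/-- Edge expansion `h(G) = min_{0 < |S| ≤ |V|/2} e(S, S̄)/|S|`. -/
noncomputable def edgeExpansion {V : Type*} [Fintype V] [DecidableEq V]
    (G : SimpleGraph V) [DecidableRel G.Adj] : ℝ :=
  sInf {r : ℝ | ∃ S : Finset V, S.Nonempty ∧ 2 * S.card ≤ Fintype.card V ∧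
    r = (cutEdges G S : ℝ) / (S.card : ℝ)}

/-- Conductance (Cheeger constant)
`φ(G) = min_{∅ ≠ S ⊊ V} e(S,S̄) / min(vol S, vol S̄)`. -/
noncomputable def conductance {V : Type*} [Fintype V] [DecidableEq V]
    (G : SimpleGraph V) [DecidableRel G.Adj] : ℝ :=
  sInf {r : ℝ | ∃ S : Finset V, S.Nonempty ∧ Sᶜ.Nonempty ∧
    r = (cutEdges G S : ℝ) / (min (vol G S) (vol G Sᶜ) : ℝ)}

section

variable {V : Type*} [Fintype V] [DecidableEq V] (G : SimpleGraph V) [DecidableRel G.Adj]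

lemma cutEdges_compl (S : Finset V) : cutEdges G Sᶜ = cutEdges G S := by
  refine Finset.card_nbij' Prod.swap Prod.swap ?_ ?_ (fun _ _ => rfl) (fun _ _ => rfl) <;>
  · rintro ⟨a, b⟩
    simp only [coe_filter, mem_product, mem_compl, compl_compl, Set.mem_ofPred_eq,
      Prod.swap_prod_mk]
    exact fun ⟨⟨ha, hb⟩, hab⟩ => ⟨⟨hb, ha⟩, hab.symm⟩

lemma cutEdges_eq_of_induce {p : V → Prop} [DecidablePred p] (H : SimpleGraph (Subtype p))
    [DecidableRel H.Adj] (hH : ∀ u v, H.Adj u v ↔ G.Adj u v) {S : Finset (Subtype p)}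
    {T : Finset V} (hT : ∀ v (hv : p v), v ∈ T ↔ ⟨v, hv⟩ ∈ S)
    (hcross : ∀ u v, G.Adj u v → u ∈ T → v ∉ T → p u ∧ p v) :
    cutEdges H S = cutEdges G T := by
  unfold cutEdges
  refine Finset.card_bij (fun q _ => (q.1.1, q.2.1)) ?_ ?_ ?_
  · rintro ⟨⟨a, ha⟩, ⟨b, hb⟩⟩ h
    simpa only [mem_filter, mem_product, mem_compl, hT _ ha, hT _ hb, hH] using h
  · rintro ⟨⟨a, _⟩, ⟨b, _⟩⟩ _ ⟨⟨c, _⟩, ⟨d, _⟩⟩ _ h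
    simpa using h
  · rintro ⟨u, v⟩ h
    simp only [mem_filter, mem_product, mem_compl] at h
    obtain ⟨hu, hv⟩ := hcross u v h.2 h.1.1 h.1.2
    refine ⟨(⟨u, hu⟩, ⟨v, hv⟩), ?_, rfl⟩
    simpa only [mem_filter, mem_product, mem_compl, ← hT, hH] using h

lemma edgeExpansion_le {S : Finset V} (hS : S.Nonempty) (hS2 : 2 * #S ≤ Fintype.card V) :
    edgeExpansion G ≤ cutEdges G S / #S :=
  csInf_le ⟨0, by rintro r ⟨S, -, -, rfl⟩; positivity⟩ ⟨S, hS, hS2, rfl⟩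

lemma edgeExpansion_le_of_card_le_succ {T : Finset V} {k : ℕ} (hk : 0 < k) (hkT : k ≤ #T)
    (hTk : #T ≤ k + 1) (hkV : 2 * k < Fintype.card V) :
    edgeExpansion G ≤ cutEdges G T / k := by
  by_cases hT2 : 2 * #T ≤ Fintype.card V
  · calc edgeExpansion G ≤ cutEdges G T / #T :=
          edgeExpansion_le G (card_pos.mp (by omega)) hT2
      _ ≤ cutEdges G T / k := by gcongr
  · have hTc : #Tᶜ = k := by rw [card_compl]; omega
    calc edgeExpansion G ≤ cutEdges G Tᶜ / #Tᶜ :=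
          edgeExpansion_le G (card_pos.mp (by omega)) (by omega)
      _ = cutEdges G T / k := by rw [cutEdges_compl, hTc]

lemma exists_cutEdges_eq_of_degree_eq_one {x : V} (hx : G.degree x = 1)
    (H : SimpleGraph {v : V // v ≠ x}) [DecidableRel H.Adj]
    (hH : ∀ u v : {v : V // v ≠ x}, H.Adj u v ↔ G.Adj u.1 v.1) (S : Finset {v : V // v ≠ x}) :
    ∃ T : Finset V, cutEdges G T = cutEdges H S ∧ #S ≤ #T ∧ #T ≤ #S + 1 := by
  obtain ⟨y, -, hy⟩ := G.degree_eq_one_iff_existsUnique_adj.mp hx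
  set S' := S.map (Function.Embedding.subtype _)
  have hS' : ∀ v (hv : v ≠ x), v ∈ S' ↔ ⟨v, hv⟩ ∈ S := by
    intro v hv
    simp [S', hv]
  have hxS' : x ∉ S' := by simp [S']
  have hcard : #S' = #S := card_map _
  by_cases hyS : y ∈ S'
  · refine ⟨insert x S', (cutEdges_eq_of_induce G H hH ?_ ?_).symm, ?_⟩
    · intro v hv
      rw [mem_insert, ← hS', or_iff_right hv]
    · intro u v huv hu hv
      refine ⟨?_, fun hvx => hv (hvx ▸ mem_insert_self _ _)⟩
      rintro rfl
      exact hv (mem_insert_of_mem (hy v huv ▸ hyS))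
    · rw [card_insert_of_notMem hxS', hcard]
      omega
  · refine ⟨S', (cutEdges_eq_of_induce G H hH hS' ?_).symm, by omega, by omega⟩
    intro u v huv hu _
    refine ⟨fun hux => hxS' (hux ▸ hu), ?_⟩
    rintro rfl
    exact hyS (hy u huv.symm ▸ hu)

end

theorem stmt_18_general {V : Type*} [Fintype V] [DecidableEq V] (G : SimpleGraph V)
    [DecidableRel G.Adj] (hn : 3 ≤ Fintype.card V)
    (x : V) (hx : G.degree x = 1)
    (H : SimpleGraph {v : V // v ≠ x}) [DecidableRel H.Adj]
    (hH : ∀ u v : {v : V // v ≠ x}, H.Adj u v ↔ G.Adj u.1 v.1) :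
    edgeExpansion G ≤ edgeExpansion H := by
  have hcard : Fintype.card {v : V // v ≠ x} = Fintype.card V - 1 := by
    rw [Fintype.card_subtype_compl, Fintype.card_subtype_eq]
  have : Nontrivial V := Fintype.one_lt_card_iff_nontrivial.mp (by omega)
  obtain ⟨v, hv⟩ := exists_ne x
  refine le_csInf ⟨_, {⟨v, hv⟩}, singleton_nonempty _, by simp [hcard]; omega, rfl⟩ ?_
  rintro _ ⟨S, hS, hS2, rfl⟩
  obtain ⟨T, hcut, hST, hTS⟩ := exists_cutEdges_eq_of_degree_eq_one G hx H hH S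
  rw [← hcut]
  exact edgeExpansion_le_of_card_le_succ G hS.card_pos hST hTS (by omega)

/-- deleting a pendant vertex (degree-1 vertex) `x` of a
connected graph `G` on `n ≥ 3` vertices does not decrease the edge expansion:
`h(G − x) ≥ h(G)`.  Here `H` is the induced subgraph of `G` on `V ∖ {x}`. -/
theorem stmt_18 {V : Type*} [Fintype V] [DecidableEq V] (G : SimpleGraph V)
    [DecidableRel G.Adj] (hconn : G.Connected) (hn : 3 ≤ Fintype.card V)
    (x : V) (hx : G.degree x = 1)
    (H : SimpleGraph {v : V // v ≠ x}) [DecidableRel H.Adj]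
    (hH : ∀ u v : {v : V // v ≠ x}, H.Adj u v ↔ G.Adj u.1 v.1) :
    edgeExpansion G ≤ edgeExpansion H :=
  stmt_18_general G hn x hx H hH
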